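/- For integers $p\ge 0$ and $a\ge 2$, and with the sl(2) character convolution defined by $z^p\otimes z^q:=\sum_{0\le k\le q}z^{p+q-2k}$ for $p\ge q$ (extended symmetrically and bilinearly, followed by the projection $\pi$ killing the span of $z^j+z^{-j-2}$), the following identity of formal power series holds: $\mu_{2p+1}(a,z):=\frac{z^a}{1-z^4}\otimes c(V_{2p+1,0})-\frac{z^{a-2}}{1-z^4}\otimes c(V_{2p,0})=\frac{z^{a}(1+z^4+\cdots+z^{4p})}{1-z^2}$, where $c(V_{2p+1,0})=z^2+z^6+\cdots+z^{4p+2}$ and $c(V_{2p,0})=1+z^4+\cdots+z^{4p}$. -/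

import Mathlib

noncomputable section

open PowerSeries

/-- The projection `π : ℂ((z)) → ℂ[[z]]` with kernel spanned by
`{z^j + z^{-j-2} : j ∈ ℤ}`. -/
def laurentPi (f : LaurentSeries ℂ) : PowerSeries ℂ :=
  PowerSeries.mk fun k => f.coeff (k : ℤ) - f.coeff (-(k : ℤ) - 2)

/-- The `sl(2)`-character of the simple module `V_q`:
`χ_q = z^q + z^{q-2} + ⋯ + z^{-q}` (a Laurent polynomial, viewed as a Laurent
series).  The convolution `f ⊗ z^q` of the text is `π (f · χ_q)`. -/
def chV (q : ℕ) : LaurentSeries ℂ :=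
  ∑ k ∈ Finset.range (q + 1), HahnSeries.single ((q : ℤ) - 2 * k) (1 : ℂ)

/-- `z^a/(1-z^4) = z^a + z^{a+4} + ⋯`, viewed as a Laurent series. -/
def geom4 (a : ℕ) : LaurentSeries ℂ :=
  HahnSeries.ofPowerSeries ℤ ℂ (X ^ a * ((1 - X ^ 4 : PowerSeries ℂ))⁻¹)

lemma laurentPi_sub (f g : LaurentSeries ℂ) :
    laurentPi (f - g) = laurentPi f - laurentPi g := by
  ext k
  simp [laurentPi]
  ring

lemma ofPS_coeff_neg (f : PowerSeries ℂ) (n : ℤ) (hn : n < 0) :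
    (HahnSeries.ofPowerSeries ℤ ℂ f).coeff n = 0 := by
  rw [HahnSeries.ofPowerSeries_apply]
  apply HahnSeries.embDomain_notin_range
  rintro ⟨m, hm⟩
  simp at hm
  omega

lemma laurentPi_ofPS (f : PowerSeries ℂ) :
    laurentPi (HahnSeries.ofPowerSeries ℤ ℂ f) = f := by
  ext k
  rw [laurentPi, coeff_mk, HahnSeries.ofPowerSeries_apply_coeff,
    ofPS_coeff_neg _ _ (by omega), sub_zero]

lemma chV_mul (q : ℕ) :
    chV q * (HahnSeries.single (2 : ℤ) (1 : ℂ) - 1) =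
      HahnSeries.single ((q : ℤ) + 2) 1 - HahnSeries.single (-(q : ℤ)) 1 := by
  rw [chV, Finset.sum_mul]
  have step : ∀ k ∈ Finset.range (q + 1),
      HahnSeries.single ((q : ℤ) - 2 * k) (1 : ℂ) * (HahnSeries.single (2 : ℤ) (1 : ℂ) - 1)
        = (fun k : ℕ => HahnSeries.single ((q : ℤ) + 2 - 2 * k) (1 : ℂ)) k
          - (fun k : ℕ => HahnSeries.single ((q : ℤ) + 2 - 2 * k) (1 : ℂ)) (k + 1) := by
    intro k _
    rw [mul_sub, mul_one, HahnSeries.single_mul_single, mul_one]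
    show _ = HahnSeries.single ((q : ℤ) + 2 - 2 * k) 1
      - HahnSeries.single ((q : ℤ) + 2 - 2 * ((k + 1 : ℕ) : ℤ)) (1 : ℂ)
    rw [show ((q : ℤ) - 2 * k + 2) = (q : ℤ) + 2 - 2 * k from by ring,
      show ((q : ℤ) + 2 - 2 * ((k + 1 : ℕ) : ℤ)) = (q : ℤ) - 2 * k from by push_cast; ring]
  rw [Finset.sum_congr rfl step, Finset.sum_range_sub'
    (f := fun k : ℕ => HahnSeries.single ((q : ℤ) + 2 - 2 * k) (1 : ℂ))]
  rw [show ((q : ℤ) + 2 - 2 * ((0 : ℕ) : ℤ)) = (q : ℤ) + 2 from by push_cast; ring,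
    show ((q : ℤ) + 2 - 2 * ((q + 1 : ℕ) : ℤ)) = -(q : ℤ) from by push_cast; ring]

lemma geom4_mul (a : ℕ) :
    geom4 a * HahnSeries.ofPowerSeries ℤ ℂ (1 - X ^ 4 : PowerSeries ℂ)
      = HahnSeries.single (a : ℤ) 1 := by
  rw [geom4, ← map_mul, mul_assoc,
    PowerSeries.inv_mul_cancel _ (by simp), mul_one, HahnSeries.ofPowerSeries_X_pow]

lemma ofPS_ne (f : PowerSeries ℂ) (hf : f ≠ 0) :
    HahnSeries.ofPowerSeries ℤ ℂ f ≠ 0 :=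
  fun h => hf (HahnSeries.ofPowerSeries_injective (by rw [h, map_zero]))

lemma key (a i : ℕ) (ha : 2 ≤ a) :
    geom4 a * chV (4 * i + 2) - geom4 (a - 2) * chV (4 * i)
      = HahnSeries.ofPowerSeries ℤ ℂ
          (X ^ (a + 4 * i) * ((1 - X ^ 2 : PowerSeries ℂ))⁻¹) := by
  have hu : (HahnSeries.single (2 : ℤ) (1 : ℂ) - 1) ≠ 0 := by
    intro h
    have h2 := congrArg (fun f : LaurentSeries ℂ => f.coeff 2) h
    simp [HahnSeries.coeff_single, HahnSeries.coeff_one] at h2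
  have hps : (1 - X ^ 4 : PowerSeries ℂ) ≠ 0 := by
    intro h
    simpa using congrArg (constantCoeff (R := ℂ)) h
  have hv := ofPS_ne _ hps
  set u : LaurentSeries ℂ := HahnSeries.single (2 : ℤ) 1 - 1 with hu_def
  set v : LaurentSeries ℂ := HahnSeries.ofPowerSeries ℤ ℂ (1 - X ^ 4 : PowerSeries ℂ)
    with hv_def
  refine mul_right_cancel₀ (mul_ne_zero hu hv) ?_
  have e1 : (geom4 a * chV (4 * i + 2)) * (u * v)
      = HahnSeries.single ((a : ℤ) + (4 * i + 4)) 1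
        - HahnSeries.single ((a : ℤ) - (4 * i + 2)) (1 : ℂ) := by
    calc (geom4 a * chV (4 * i + 2)) * (u * v)
        = (geom4 a * v) * (chV (4 * i + 2) * u) := by ring
      _ = HahnSeries.single (a : ℤ) 1 *
            (HahnSeries.single (((4 * i + 2 : ℕ) : ℤ) + 2) 1
              - HahnSeries.single (-((4 * i + 2 : ℕ) : ℤ)) 1) := by
          rw [geom4_mul, chV_mul]
      _ = _ := by
          rw [mul_sub, HahnSeries.single_mul_single, HahnSeries.single_mul_single, one_mul]
          rw [show (a : ℤ) + (((4 * i + 2 : ℕ) : ℤ) + 2) = (a : ℤ) + (4 * i + 4) from by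
                push_cast; ring,
            show (a : ℤ) + (-((4 * i + 2 : ℕ) : ℤ)) = (a : ℤ) - (4 * i + 2) from by
                push_cast; ring]
  have A2 : geom4 (a - 2) * v = HahnSeries.single ((a : ℤ) - 2) 1 := by
    have h := geom4_mul (a - 2)
    rwa [Nat.cast_sub ha] at h
  have e2 : (geom4 (a - 2) * chV (4 * i)) * (u * v)
      = HahnSeries.single ((a : ℤ) + 4 * i) 1
        - HahnSeries.single ((a : ℤ) - (4 * i + 2)) (1 : ℂ) := by
    calc (geom4 (a - 2) * chV (4 * i)) * (u * v)
        = (geom4 (a - 2) * v) * (chV (4 * i) * u) := by ring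
      _ = HahnSeries.single ((a : ℤ) - 2) 1 *
            (HahnSeries.single (((4 * i : ℕ) : ℤ) + 2) 1
              - HahnSeries.single (-((4 * i : ℕ) : ℤ)) 1) := by
          rw [A2, chV_mul]
      _ = _ := by
          rw [mul_sub, HahnSeries.single_mul_single, HahnSeries.single_mul_single, one_mul]
          rw [show (a : ℤ) - 2 + (((4 * i : ℕ) : ℤ) + 2) = (a : ℤ) + 4 * i from by
                push_cast; ring,
            show (a : ℤ) - 2 + (-((4 * i : ℕ) : ℤ)) = (a : ℤ) - (4 * i + 2) from by
                push_cast; ring]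
  have e3 : HahnSeries.ofPowerSeries ℤ ℂ
        (X ^ (a + 4 * i) * ((1 - X ^ 2 : PowerSeries ℂ))⁻¹) * (u * v)
      = HahnSeries.single ((a : ℤ) + (4 * i + 4)) 1
        - HahnSeries.single ((a : ℤ) + 4 * i) (1 : ℂ) := by
    have hu2 : HahnSeries.ofPowerSeries ℤ ℂ ((X : PowerSeries ℂ) ^ 2 - 1) = u := by
      rw [hu_def, map_sub, RingHom.map_one, HahnSeries.ofPowerSeries_X_pow]
      norm_num
    have hv2 : v = 1 - HahnSeries.single ((4 : ℕ) : ℤ) 1 := by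
      rw [hv_def, map_sub, RingHom.map_one, HahnSeries.ofPowerSeries_X_pow]
    have hx : HahnSeries.ofPowerSeries ℤ ℂ
          (X ^ (a + 4 * i) * ((1 - X ^ 2 : PowerSeries ℂ))⁻¹) * u
        = -HahnSeries.single (((a + 4 * i : ℕ)) : ℤ) 1 := by
      rw [← hu2, ← map_mul,
        show (X ^ (a + 4 * i) * ((1 - X ^ 2 : PowerSeries ℂ))⁻¹ * ((X : PowerSeries ℂ) ^ 2 - 1))
          = -(X ^ (a + 4 * i)) * (((1 - X ^ 2 : PowerSeries ℂ))⁻¹ * (1 - X ^ 2)) from by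
            ring,
        PowerSeries.inv_mul_cancel _ (by simp), mul_one, map_neg,
        HahnSeries.ofPowerSeries_X_pow]
    rw [← mul_assoc, hx, hv2]
    calc -HahnSeries.single (((a + 4 * i : ℕ)) : ℤ) (1 : ℂ)
          * (1 - HahnSeries.single ((4 : ℕ) : ℤ) 1)
        = HahnSeries.single (((a + 4 * i : ℕ)) : ℤ) (1 : ℂ)
            * HahnSeries.single ((4 : ℕ) : ℤ) 1
          - HahnSeries.single (((a + 4 * i : ℕ)) : ℤ) 1 := by ring
      _ = _ := by
          rw [HahnSeries.single_mul_single, one_mul]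
          rw [show (((a + 4 * i : ℕ)) : ℤ) + ((4 : ℕ) : ℤ) = (a : ℤ) + (4 * i + 4) from by
                push_cast; ring,
            show (((a + 4 * i : ℕ)) : ℤ) = (a : ℤ) + 4 * i from by push_cast; ring]
  rw [sub_mul, e1, e2, e3]
  abel

/-- for `p ≥ 0` and `a ≥ 2`,
`μ_{2p+1}(a,z) = (z^a/(1-z⁴)) ⊗ c(V_{2p+1,0}) - (z^{a-2}/(1-z⁴)) ⊗ c(V_{2p,0})
             = z^a (1 + z⁴ + ⋯ + z^{4p})/(1-z²)`,
where `c(V_{2p,0}) = 1 + z⁴ + ⋯ + z^{4p}`, `c(V_{2p+1,0}) = z² + z⁶ + ⋯ + z^{4p+2}`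
(so `c(V_{2p+1,0}) = ∑_{i≤p} χ-exponents 4i+2`, `c(V_{2p,0}) = ∑_{i≤p} exponents 4i`),
and `f ⊗ z^q := π(f · χ_q)` with `π` killing the span of `{z^j + z^{-j-2}}`. -/
theorem stmt_16 (p a : ℕ) (ha : 2 ≤ a) :
    (∑ i ∈ Finset.range (p + 1), laurentPi (geom4 a * chV (4 * i + 2)))
      - (∑ i ∈ Finset.range (p + 1), laurentPi (geom4 (a - 2) * chV (4 * i))) =
    X ^ a * (∑ i ∈ Finset.range (p + 1), (X : PowerSeries ℂ) ^ (4 * i)) *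
      ((1 - X ^ 2 : PowerSeries ℂ))⁻¹ := by
  rw [← Finset.sum_sub_distrib, Finset.mul_sum, Finset.sum_mul]
  refine Finset.sum_congr rfl fun i _ => ?_
  rw [← laurentPi_sub, key a i ha, laurentPi_ofPS, pow_add]


end
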